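/- For every positive integer m, the 4-coloring of [8m+4] that colors 1 with C, then repeats the block ABCC m times, then the block DDAB m times, then three final elements colored D, B, A, is equinumerous (each color class has exactly 2m+1 elements) and contains no rainbow 4-term arithmetic progression. -/
import Mathlib

inductive Color | A | B | C | D
  deriving DecidableEq

open Color

/-- A coloring `c` of `{1,...,n}` contains a rainbow 4-term AP. -/
def RainbowAP4 (n : ℕ) (c : ℕ → Color) : Prop :=
  ∃ t d : ℕ, 1 ≤ t ∧ 1 ≤ d ∧ t + 3*d ≤ n ∧
    c t ≠ c (t+d) ∧ c t ≠ c (t+2*d) ∧ c t ≠ c (t+3*d) ∧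
    c (t+d) ≠ c (t+2*d) ∧ c (t+d) ≠ c (t+3*d) ∧ c (t+2*d) ≠ c (t+3*d)

/-- The coloring for STATEMENT 5. -/
def col (m i : ℕ) : Color :=
  if i = 1 then C else if i ≤ 4*m+1 then (if i % 4 = 2 then A else if i % 4 = 3 then B else C) else if i ≤ 8*m+1 then (if i % 4 = 2 ∨ i % 4 = 3 then D else if i % 4 = 0 then A else B) else if i = 8*m+2 then D else if i = 8*m+3 then B else A

lemma colA_iff (m i : ℕ) (hm : 0 < m) (h1 : 1 ≤ i) (h2 : i ≤ 8*m+4) :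
    col m i = A ↔ ((i ≤ 4*m+1 ∧ i % 4 = 2) ∨ (4*m+2 ≤ i ∧ i % 4 = 0)) := by
  unfold col; split_ifs <;> simp_all <;> omega

lemma colB_iff (m i : ℕ) (hm : 0 < m) (h1 : 1 ≤ i) (h2 : i ≤ 8*m+4) :
    col m i = B ↔ ((i ≤ 4*m+1 ∧ i % 4 = 3) ∨ (4*m+2 ≤ i ∧ i ≤ 8*m+1 ∧ i % 4 = 1) ∨ i = 8*m+3) := by
  unfold col; split_ifs <;> simp_all <;> omega

lemma colC_iff (m i : ℕ) (hm : 0 < m) (h1 : 1 ≤ i) (h2 : i ≤ 8*m+4) :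
    col m i = C ↔ (i ≤ 4*m+1 ∧ (i % 4 = 0 ∨ i % 4 = 1)) := by
  unfold col; split_ifs <;> simp_all <;> omega

lemma colD_iff (m i : ℕ) (hm : 0 < m) (h1 : 1 ≤ i) (h2 : i ≤ 8*m+4) :
    col m i = D ↔ (4*m+2 ≤ i ∧ i ≤ 8*m+2 ∧ (i % 4 = 2 ∨ i % 4 = 3)) := by
  unfold col; split_ifs <;> simp_all <;> omega

lemma col_cases (m i : ℕ) (hm : 0 < m) (h1 : 1 ≤ i) (h2 : i ≤ 8*m+4) :
    (col m i = A ∧ ((i ≤ 4*m+1 ∧ i % 4 = 2) ∨ (4*m+2 ≤ i ∧ i % 4 = 0))) ∨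
    (col m i = B ∧ ((i ≤ 4*m+1 ∧ i % 4 = 3) ∨ (4*m+2 ≤ i ∧ i ≤ 8*m+1 ∧ i % 4 = 1) ∨ i = 8*m+3)) ∨
    (col m i = C ∧ (i ≤ 4*m+1 ∧ (i % 4 = 0 ∨ i % 4 = 1))) ∨
    (col m i = D ∧ (4*m+2 ≤ i ∧ i ≤ 8*m+2 ∧ (i % 4 = 2 ∨ i % 4 = 3))) := by
  rcases h : col m i with _ | _ | _ | _
  · exact Or.inl ⟨rfl, (colA_iff m i hm h1 h2).mp h⟩
  · exact Or.inr (Or.inl ⟨rfl, (colB_iff m i hm h1 h2).mp h⟩)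
  · exact Or.inr (Or.inr (Or.inl ⟨rfl, (colC_iff m i hm h1 h2).mp h⟩))
  · exact Or.inr (Or.inr (Or.inr ⟨rfl, (colD_iff m i hm h1 h2).mp h⟩))

theorem stmt_5 (m : ℕ) (hm : 0 < m) :
    (∀ x : Color, ((Finset.Icc 1 (8*m+4)).filter (fun i => col m i = x)).card = 2*m+1) ∧ ¬ RainbowAP4 (8*m+4) (col m) := by
  constructor
  · intro x
    cases x with
    | A =>
      refine Finset.card_eq_of_bijective (fun j _ => if j < m then 4*j+2 else 4*j+4) ?_ ?_ ?_
      · intro i hi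
        simp only [Finset.mem_filter, Finset.mem_Icc] at hi
        obtain ⟨⟨hi1, hi2⟩, hcol⟩ := hi
        rw [colA_iff m i hm hi1 hi2] at hcol
        exact ⟨if i ≤ 4*m+1 then i/4 else i/4 - 1, by split_ifs <;> omega, by (try dsimp only); split_ifs <;> omega⟩
      · intro j hj
        simp only [Finset.mem_filter, Finset.mem_Icc]
        refine ⟨⟨by split_ifs <;> omega, by (try dsimp only); split_ifs <;> omega⟩, ?_⟩
        rw [colA_iff m _ hm (by split_ifs <;> omega) (by split_ifs <;> omega)]
        split_ifs <;> omega
      · intro i j hi hj h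
        split_ifs at h <;> omega
    | B =>
      refine Finset.card_eq_of_bijective
        (fun j _ => if j < m then 4*j+3 else if j < 2*m then 4*j+5 else 8*m+3) ?_ ?_ ?_
      · intro i hi
        simp only [Finset.mem_filter, Finset.mem_Icc] at hi
        obtain ⟨⟨hi1, hi2⟩, hcol⟩ := hi
        rw [colB_iff m i hm hi1 hi2] at hcol
        exact ⟨if i ≤ 4*m+1 then i/4 else if i ≤ 8*m+1 then i/4 - 1 else 2*m,
          by split_ifs <;> omega, by (try dsimp only); split_ifs <;> omega⟩
      · intro j hj
        simp only [Finset.mem_filter, Finset.mem_Icc]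
        refine ⟨⟨by split_ifs <;> omega, by (try dsimp only); split_ifs <;> omega⟩, ?_⟩
        rw [colB_iff m _ hm (by split_ifs <;> omega) (by split_ifs <;> omega)]
        split_ifs <;> omega
      · intro i j hi hj h
        split_ifs at h <;> omega
    | C =>
      refine Finset.card_eq_of_bijective
        (fun j _ => if j = 0 then 1 else if j % 2 = 1 then 2*j+2 else 2*j+1) ?_ ?_ ?_
      · intro i hi
        simp only [Finset.mem_filter, Finset.mem_Icc] at hi
        obtain ⟨⟨hi1, hi2⟩, hcol⟩ := hi
        rw [colC_iff m i hm hi1 hi2] at hcol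
        exact ⟨if i = 1 then 0 else if i % 4 = 0 then i/2 - 1 else i/2,
          by split_ifs <;> omega, by (try dsimp only); split_ifs <;> omega⟩
      · intro j hj
        simp only [Finset.mem_filter, Finset.mem_Icc]
        refine ⟨⟨by split_ifs <;> omega, by (try dsimp only); split_ifs <;> omega⟩, ?_⟩
        rw [colC_iff m _ hm (by split_ifs <;> omega) (by split_ifs <;> omega)]
        split_ifs <;> omega
      · intro i j hi hj h
        split_ifs at h <;> omega
    | D =>
      refine Finset.card_eq_of_bijective
        (fun j _ => if j % 2 = 0 then 4*m+2+2*j else 4*m+1+2*j) ?_ ?_ ?_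
      · intro i hi
        simp only [Finset.mem_filter, Finset.mem_Icc] at hi
        obtain ⟨⟨hi1, hi2⟩, hcol⟩ := hi
        rw [colD_iff m i hm hi1 hi2] at hcol
        exact ⟨if i % 4 = 2 then (i - 4*m - 2)/2 else (i - 4*m - 1)/2,
          by split_ifs <;> omega, by (try dsimp only); split_ifs <;> omega⟩
      · intro j hj
        simp only [Finset.mem_filter, Finset.mem_Icc]
        refine ⟨⟨by split_ifs <;> omega, by (try dsimp only); split_ifs <;> omega⟩, ?_⟩
        rw [colD_iff m _ hm (by split_ifs <;> omega) (by split_ifs <;> omega)]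
        split_ifs <;> omega
      · intro i j hi hj h
        split_ifs at h <;> omega
  · rintro ⟨t, d, ht, hd, hle, h12, h13, h14, h23, h24, h34⟩
    have p0 := col_cases m t hm ht (by omega)
    have p1 := col_cases m (t+d) hm (by omega) (by omega)
    have p2 := col_cases m (t+2*d) hm (by omega) (by omega)
    have p3 := col_cases m (t+3*d) hm (by omega) (by omega)
    rcases p0 with ⟨e0, a0⟩ | ⟨e0, a0⟩ | ⟨e0, a0⟩ | ⟨e0, a0⟩ <;>
      rcases p1 with ⟨e1, a1⟩ | ⟨e1, a1⟩ | ⟨e1, a1⟩ | ⟨e1, a1⟩ <;>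
      rcases p2 with ⟨e2, a2⟩ | ⟨e2, a2⟩ | ⟨e2, a2⟩ | ⟨e2, a2⟩ <;>
      rcases p3 with ⟨e3, a3⟩ | ⟨e3, a3⟩ | ⟨e3, a3⟩ | ⟨e3, a3⟩ <;>
      simp only [e0, e1, e2, e3, ne_eq, reduceCtorEq, not_false_eq_true, not_true_eq_false] at h12 h13 h14 h23 h24 h34 <;>
      omega
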